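/- arXiv:0905.2646 — 3 statements merged into one kernel-verified Lean document; each statement's English description precedes it below -/
import Mathlib

section
/- Let p ∈ [-1, 0), let K be an m×r real matrix of full column rank (r ≤ m), let w be a probability vector with w_i > 0 for all i, let λ ∈ (0,1], set d_i(w) = tr(M(w)^{-1} K (Kᵀ M(w)^{-1} K)^{-p-1} Kᵀ M(w)^{-1} A_i), and define w'_i = w_i d_i(w)^λ / Σ_j w_j d_j(w)^λ. If M(w) and M(w') are both positive definite and not all d_i(w) are zero, then tr((Kᵀ M(w')^{-1} K)^{-p}) ≤ tr((Kᵀ M(w)^{-1} K)^{-p}). (Monotonicity of the multiplicative algorithm for φ_{p,K}(M) = -tr((Kᵀ M^{-1} K)^{-p}), p ∈ [-1, 0).) -/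
/-!
Put `q = -p ∈ (0, 1]`, `Y = Kᵀ M(w)⁻¹ K` and `X = Kᵀ M(w')⁻¹ K`. Klein's inequality for the concave
function `t ↦ t ^ q` gives `tr X^q ≤ (1 - q) tr Y^q + q tr (Y^(q-1) X)`, so it suffices to show
`tr (Y^(q-1) X) ≤ tr Y^q`. With `L = K Y^((q-1)/2)` this reads `T ≤ tr (Lᵀ M(w)⁻¹ L) = ∑ w_i d_i`,
where `T = tr (Lᵀ M(w')⁻¹ L)` and `d_i = tr (Lᵀ M(w)⁻¹ A_i M(w)⁻¹ L)`.

Inserting `M(w) M(w)⁻¹ = 1` into `T` and applying Cauchy–Schwarz to the forms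
`(B, C) ↦ tr (Bᵀ A_i C)` gives `T ≤ ∑ w_i √(d_i e_i)` with `e_i = tr (Lᵀ M(w')⁻¹ A_i M(w')⁻¹ L)`,
while inserting `M(w') M(w')⁻¹ = 1` gives `T = ∑ w'_i e_i`. Cauchy–Schwarz once more yields
`T² ≤ (∑ w_i d_i^(1-λ)) (∑ w_i d_i^λ e_i) = (∑ w_i d_i^(1-λ)) (∑ w_i d_i^λ) T`, and by Chebyshev's
sum inequality the product of these two weighted means is at most `∑ w_i d_i`.
-/

open Matrix

/-- The real power `M^s` of a symmetric matrix, defined via the spectral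
decomposition: if `M = U diag(μ) Uᵀ` then `M^s = U diag(μ^s) Uᵀ`
(junk value `0` if `M` is not symmetric). -/
noncomputable def mpow {k : ℕ} (M : Matrix (Fin k) (Fin k) ℝ) (s : ℝ) :
    Matrix (Fin k) (Fin k) ℝ :=
  if h : M.IsHermitian then h.cfc (fun x => x ^ s) else 0

lemma Real.rpow_le_tangent {q μ ν : ℝ} (hq0 : 0 ≤ q) (hq1 : q ≤ 1) (hμ : 0 < μ) (hν : 0 ≤ ν) :
    ν ^ q ≤ (1 - q) * μ ^ q + q * μ ^ (q - 1) * ν := by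
  have hBernoulli := rpow_one_add_le_one_add_mul_self
    (by linarith [div_nonneg hν hμ.le] : -1 ≤ ν / μ - 1) hq0 hq1
  rw [add_sub_cancel] at hBernoulli
  calc ν ^ q = μ ^ q * (ν / μ) ^ q := by
        rw [Real.div_rpow hν hμ.le, mul_div_cancel₀ _ (Real.rpow_pos_of_pos hμ q).ne']
    _ ≤ μ ^ q * (1 + q * (ν / μ - 1)) := by gcongr
    _ = (1 - q) * μ ^ q + q * μ ^ (q - 1) * ν := by
        rw [Real.rpow_sub_one hμ.ne']
        field_simp
        ring

section WeightedSums

variable {ι : Type*} [Fintype ι]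

theorem Monovary.weighted_sum_mul_sum_le {w f g : ι → ℝ} (hw : ∀ i, 0 ≤ w i)
    (hfg : Monovary f g) :
    (∑ i, w i * f i) * (∑ i, w i * g i) ≤ (∑ i, w i) * ∑ i, w i * (f i * g i) := by
  have h : ∑ i, ∑ j, w i * w j * (f i * g j + f j * g i) ≤
      ∑ i, ∑ j, w i * w j * (f i * g i + f j * g j) :=
    Finset.sum_le_sum fun i _ => Finset.sum_le_sum fun j _ =>
      mul_le_mul_of_nonneg_left (hfg.mul_add_mul_le_mul_add_mul i j) (mul_nonneg (hw i) (hw j))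
  have hl : ∑ i, ∑ j, w i * w j * (f i * g j + f j * g i) =
      (∑ i, w i * f i) * (∑ i, w i * g i) + (∑ i, w i * g i) * (∑ i, w i * f i) := by
    simp only [Finset.sum_mul_sum, ← Finset.sum_add_distrib]
    exact Finset.sum_congr rfl fun i _ => Finset.sum_congr rfl fun j _ => by ring
  have hr : ∑ i, ∑ j, w i * w j * (f i * g i + f j * g j) =
      (∑ i, w i) * (∑ i, w i * (f i * g i)) + (∑ i, w i * (f i * g i)) * (∑ i, w i) := by
    simp only [Finset.sum_mul_sum, ← Finset.sum_add_distrib]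
    exact Finset.sum_congr rfl fun i _ => Finset.sum_congr rfl fun j _ => by ring
  linarith

theorem le_sum_mul_of_le_sum_mul_sqrt_of_mul_eq {w d e : ι → ℝ} (hw : ∀ i, 0 ≤ w i)
    (hw1 : ∑ i, w i = 1) (hd : ∀ i, 0 ≤ d i) (he : ∀ i, 0 ≤ e i) {lam : ℝ} (hlam0 : 0 ≤ lam)
    (hlam1 : lam ≤ 1) {T : ℝ} (hT : T ≤ ∑ i, w i * √(d i * e i))
    (hTe : (∑ i, w i * d i ^ lam) * T = ∑ i, w i * d i ^ lam * e i) :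
    T ≤ ∑ i, w i * d i := by
  rcases le_or_gt T 0 with hT0 | hT0
  · exact hT0.trans (Finset.sum_nonneg fun i _ => mul_nonneg (hw i) (hd i))
  have hsplit : ∀ i, d i ^ lam * d i ^ (1 - lam) = d i := fun i => by
    rw [← Real.rpow_add' (hd i) (by norm_num), add_sub_cancel, Real.rpow_one]
  have hmono : Monovary (fun i => d i ^ lam) (fun i => d i ^ (1 - lam)) := fun i j hij =>
    Real.rpow_le_rpow (hd i) (lt_of_not_ge fun hji =>
      hij.not_ge (Real.rpow_le_rpow (hd j) hji (by linarith))).le hlam0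
  have hcheb := hmono.weighted_sum_mul_sum_le hw
  rw [hw1, one_mul] at hcheb
  simp only [hsplit] at hcheb
  have hcs : (∑ i, w i * √(d i * e i)) ^ 2 ≤
      (∑ i, w i * d i ^ (1 - lam)) * ∑ i, w i * d i ^ lam * e i := by
    refine Finset.sum_sq_le_sum_mul_sum_of_sq_le_mul _
      (fun i _ => mul_nonneg (hw i) (Real.rpow_nonneg (hd i) _))
      (fun i _ => mul_nonneg (mul_nonneg (hw i) (Real.rpow_nonneg (hd i) _)) (he i))
      (fun i _ => le_of_eq ?_)
    rw [mul_pow, Real.sq_sqrt (mul_nonneg (hd i) (he i))]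
    linear_combination -(w i ^ 2 * e i) * hsplit i
  have hTT : T * T ≤ (∑ i, w i * d i ^ lam) * (∑ i, w i * d i ^ (1 - lam)) * T := by
    calc T * T ≤ (∑ i, w i * √(d i * e i)) ^ 2 := by nlinarith
      _ ≤ _ := hcs
      _ = _ := by rw [← hTe]; ring
  exact (le_of_mul_le_mul_right hTT hT0).trans hcheb

end WeightedSums

namespace Matrix

section Spectral

variable {ι : Type*} [Fintype ι] [DecidableEq ι]

lemma IsHermitian.cfc_eq_mul_diagonal_mul {A : Matrix ι ι ℝ} (hA : A.IsHermitian) (f : ℝ → ℝ) :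
    cfc f A = (hA.eigenvectorUnitary : Matrix ι ι ℝ) * diagonal (f ∘ hA.eigenvalues) *
      (hA.eigenvectorUnitary : Matrix ι ι ℝ)ᵀ := by
  rw [hA.cfc_eq, IsHermitian.cfc, Unitary.conjStarAlgAut_apply, RCLike.ofReal_real_eq_id]
  rfl

lemma trace_diagonal_mul_mul_diagonal_mul_transpose (a b : ι → ℝ) (W : Matrix ι ι ℝ) :
    (diagonal a * W * diagonal b * Wᵀ).trace = ∑ i, ∑ j, a i * b j * W i j ^ 2 := by
  simp only [trace, diag_apply, mul_apply, diagonal_apply, transpose_apply, ite_mul, zero_mul,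
    mul_ite, mul_zero, Finset.sum_ite_eq, Finset.sum_ite_eq', Finset.mem_univ, if_true]
  refine Finset.sum_congr rfl fun i _ => Finset.sum_congr rfl fun j _ => ?_
  ring

lemma IsHermitian.trace_cfc_mul_cfc {X Y : Matrix ι ι ℝ} (hX : X.IsHermitian)
    (hY : Y.IsHermitian) (f g : ℝ → ℝ) :
    (cfc g Y * cfc f X).trace = ∑ i, ∑ j, g (hY.eigenvalues i) * f (hX.eigenvalues j) *
      ((hY.eigenvectorUnitary : Matrix ι ι ℝ)ᵀ * hX.eigenvectorUnitary) i j ^ 2 := by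
  rw [← trace_diagonal_mul_mul_diagonal_mul_transpose, hY.cfc_eq_mul_diagonal_mul,
    hX.cfc_eq_mul_diagonal_mul]
  simp only [transpose_mul, transpose_transpose, Matrix.mul_assoc]
  rw [trace_mul_comm]
  simp only [Matrix.mul_assoc]
  rfl

theorem IsHermitian.trace_cfc_le_of_eigenvalues {X Y : Matrix ι ι ℝ} (hX : X.IsHermitian)
    (hY : Y.IsHermitian) {φ α β : ℝ → ℝ}
    (h : ∀ i j, φ (hX.eigenvalues j) ≤
      α (hY.eigenvalues i) + β (hY.eigenvalues i) * hX.eigenvalues j) :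
    (cfc φ X).trace ≤ (cfc α Y).trace + (cfc β Y * X).trace := by
  have key := hX.trace_cfc_mul_cfc hY
  generalize (hY.eigenvectorUnitary : Matrix ι ι ℝ)ᵀ * hX.eigenvectorUnitary = W at key
  calc (cfc φ X).trace = (cfc (fun _ : ℝ => (1 : ℝ)) Y * cfc φ X).trace := by
        rw [cfc_const_one ℝ Y, Matrix.one_mul]
    _ = ∑ i, ∑ j, 1 * φ (hX.eigenvalues j) * W i j ^ 2 := key _ _
    _ ≤ ∑ i, ∑ j, (α (hY.eigenvalues i) * 1 + β (hY.eigenvalues i) * hX.eigenvalues j) *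
          W i j ^ 2 := by
        gcongr with i _ j _
        simpa using h i j
    _ = (cfc α Y * cfc (fun _ : ℝ => (1 : ℝ)) X).trace +
          (cfc β Y * cfc (fun x : ℝ => x) X).trace := by
        simp only [key, add_mul, Finset.sum_add_distrib]
    _ = (cfc α Y).trace + (cfc β Y * X).trace := by
        rw [cfc_const_one ℝ X, Matrix.mul_one, cfc_id' ℝ X]

end Spectral

section Mpow

variable {k : ℕ} {M : Matrix (Fin k) (Fin k) ℝ}

lemma mpow_eq_cfc (hM : M.IsHermitian) (s : ℝ) : mpow M s = cfc (fun x : ℝ => x ^ s) M := by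
  rw [mpow, dif_pos hM, hM.cfc_eq]

lemma transpose_mpow (hM : M.IsHermitian) (s : ℝ) : (mpow M s)ᵀ = mpow M s := by
  rw [mpow_eq_cfc hM, ← conjTranspose_eq_transpose_of_trivial]
  exact cfc_predicate (R := ℝ) _ M

lemma mpow_one (hM : M.IsHermitian) : mpow M 1 = M := by
  rw [mpow_eq_cfc hM]
  simp only [Real.rpow_one]
  exact cfc_id' ℝ M

lemma PosDef.mpow_mul_mpow (hM : M.PosDef) (a b : ℝ) :
    mpow M a * mpow M b = mpow M (a + b) := by
  rw [mpow_eq_cfc hM.1, mpow_eq_cfc hM.1, mpow_eq_cfc hM.1,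
    ← cfc_mul _ _ M (M.finite_real_spectrum.continuousOn _) (M.finite_real_spectrum.continuousOn _)]
  refine cfc_congr fun x hx => (Real.rpow_add ?_ a b).symm
  rw [hM.1.spectrum_real_eq_range_eigenvalues] at hx
  obtain ⟨i, rfl⟩ := hx
  exact hM.eigenvalues_pos i

lemma PosDef.mpow_mul_self (hM : M.PosDef) (s : ℝ) : mpow M s * M = mpow M (s + 1) := by
  nth_rw 2 [← mpow_one hM.1]
  exact hM.mpow_mul_mpow s 1

/-- Klein's trace inequality for the concave function `x ↦ x ^ q`. -/
theorem PosDef.trace_mpow_le {X Y : Matrix (Fin k) (Fin k) ℝ} (hY : Y.PosDef)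
    (hX : X.PosSemidef) {q : ℝ} (hq0 : 0 ≤ q) (hq1 : q ≤ 1) :
    (mpow X q).trace ≤ (1 - q) * (mpow Y q).trace + q * (mpow Y (q - 1) * X).trace := by
  have h := hX.1.trace_cfc_le_of_eigenvalues hY.1 (φ := fun ν => ν ^ q)
    (α := fun μ => (1 - q) * μ ^ q) (β := fun μ => q * μ ^ (q - 1))
    fun i j => Real.rpow_le_tangent hq0 hq1 (hY.eigenvalues_pos i) (hX.eigenvalues_nonneg j)
  rwa [cfc_const_mul .., cfc_const_mul _ _ _ (Y.finite_real_spectrum.continuousOn _), trace_smul,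
    smul_mul_assoc, trace_smul, ← mpow_eq_cfc hX.1, ← mpow_eq_cfc hY.1, ← mpow_eq_cfc hY.1] at h

end Mpow

section TraceForms

variable {ι α β : Type*} [Fintype ι] [Fintype α] [Fintype β]

lemma PosSemidef.trace_transpose_mul_mul_nonneg {A : Matrix α α ℝ} (hA : A.PosSemidef)
    (B : Matrix α β ℝ) : 0 ≤ (Bᵀ * A * B).trace := by
  simpa [conjTranspose_eq_transpose_of_trivial] using (hA.conjTranspose_mul_mul_same B).trace_nonneg

lemma PosSemidef.trace_transpose_mul_mul_sq_le {A : Matrix α α ℝ} (hA : A.PosSemidef)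
    (B C : Matrix α β ℝ) :
    (Bᵀ * A * C).trace ^ 2 ≤ (Bᵀ * A * B).trace * (Cᵀ * A * C).trace := by
  let F : LinearMap.BilinForm ℝ (Matrix α β ℝ) :=
    LinearMap.mk₂ ℝ (fun B C => (Bᵀ * A * C).trace)
      (fun _ _ _ => by simp only [transpose_add, Matrix.add_mul, trace_add])
      (fun _ _ _ => by simp only [transpose_smul, Matrix.smul_mul, trace_smul])
      (fun _ _ _ => by simp only [Matrix.mul_add, trace_add])
      (fun _ _ _ => by simp only [Matrix.mul_smul, trace_smul])
  have hsymm : (Cᵀ * A * B).trace = (Bᵀ * A * C).trace := by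
    rw [← trace_transpose, transpose_mul, transpose_mul, transpose_transpose,
      (isHermitian_iff_isSymm.mp hA.1).eq, Matrix.mul_assoc]
  have h := F.apply_mul_apply_le_of_forall_zero_le hA.trace_transpose_mul_mul_nonneg B C
  simpa [F, hsymm, sq] using h

lemma trace_transpose_mul_sum_smul_mul (B C : Matrix α β ℝ) (A : ι → Matrix α α ℝ) (v : ι → ℝ) :
    (Bᵀ * (∑ i, v i • A i) * C).trace = ∑ i, v i * (Bᵀ * A i * C).trace := by
  simp only [Matrix.mul_sum, Matrix.sum_mul, trace_sum, Matrix.mul_smul, Matrix.smul_mul,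
    trace_smul, smul_eq_mul]

lemma PosDef.transpose_mul_mul_of_rank_eq_card {P : Matrix α α ℝ} (hP : P.PosDef)
    {K : Matrix α β ℝ} (hK : K.rank = Fintype.card β) : (Kᵀ * P * K).PosDef := by
  have hinj : Function.Injective K.mulVec := by
    rw [mulVec_injective_iff, linearIndependent_iff_card_eq_finrank_span, Set.finrank,
      ← rank_eq_finrank_span_cols, hK]
  simpa [conjTranspose_eq_transpose_of_trivial] using hP.conjTranspose_mul_mul_same hinj

lemma PosDef.trace_conj_mul_mpow_half {r : ℕ} {Y : Matrix (Fin r) (Fin r) ℝ} (hY : Y.PosDef)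
    (s : ℝ) (K : Matrix α (Fin r) ℝ) (Z : Matrix α α ℝ) :
    ((K * mpow Y (s / 2))ᵀ * Z * (K * mpow Y (s / 2))).trace = (mpow Y s * (Kᵀ * Z * K)).trace := by
  calc ((K * mpow Y (s / 2))ᵀ * Z * (K * mpow Y (s / 2))).trace
      = (mpow Y (s / 2) * (Kᵀ * Z * K * mpow Y (s / 2))).trace := by
        rw [transpose_mul, transpose_mpow hY.1]
        simp only [Matrix.mul_assoc]
    _ = (Kᵀ * Z * K * (mpow Y (s / 2) * mpow Y (s / 2))).trace := by
        rw [trace_mul_comm, Matrix.mul_assoc]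
    _ = (mpow Y s * (Kᵀ * Z * K)).trace := by
        rw [hY.mpow_mul_mpow, add_halves, trace_mul_comm]

lemma PosDef.trace_mul_mul_mpow_mul_transpose_mul {r : ℕ} {Y : Matrix (Fin r) (Fin r) ℝ}
    (hY : Y.PosDef) (s : ℝ) (K : Matrix α (Fin r) ℝ) (N Z : Matrix α α ℝ) :
    (N * K * mpow Y s * Kᵀ * Z).trace =
      ((K * mpow Y (s / 2))ᵀ * (Z * N) * (K * mpow Y (s / 2))).trace := by
  rw [hY.trace_conj_mul_mpow_half]
  simp only [Matrix.mul_assoc]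
  rw [trace_mul_comm N]
  simp only [Matrix.mul_assoc]
  rw [trace_mul_comm K]
  simp only [Matrix.mul_assoc]

end TraceForms

end Matrix

theorem trace_transpose_mul_inv_mul_le_of_multiplicative_update {ι α β : Type*} [Fintype ι]
    [Fintype α] [DecidableEq α] [Fintype β] {A : ι → Matrix α α ℝ} (hA : ∀ i, (A i).PosSemidef)
    {M : (ι → ℝ) → Matrix α α ℝ} (hM : ∀ v, M v = ∑ i, v i • A i) {w w' d : ι → ℝ}
    (hw : ∀ i, 0 < w i) (hw1 : ∑ i, w i = 1) {lam : ℝ} (hlam0 : 0 ≤ lam) (hlam1 : lam ≤ 1)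
    (L : Matrix α β ℝ) (hd : ∀ i, d i = (Lᵀ * (M w)⁻¹ * A i * (M w)⁻¹ * L).trace)
    (hw' : ∀ i, w' i = w i * d i ^ lam / ∑ j, w j * d j ^ lam)
    (hMw : (M w).PosDef) (hMw' : (M w').PosDef) (hdne : ∃ i, d i ≠ 0) :
    (Lᵀ * (M w')⁻¹ * L).trace ≤ (Lᵀ * (M w)⁻¹ * L).trace := by
  have htranspose {N : Matrix α α ℝ} (hN : N.PosDef) : (N⁻¹ * L)ᵀ = Lᵀ * N⁻¹ := by
    rw [transpose_mul, (isHermitian_iff_isSymm.mp hN.inv.1).eq]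
  have hcancel {N : Matrix α α ℝ} (hN : N.PosDef) : N * (N⁻¹ * L) = L := by
    rw [← Matrix.mul_assoc, mul_nonsing_inv _ hN.det_pos.ne'.isUnit, Matrix.one_mul]
  set B := (M w)⁻¹ * L
  set B' := (M w')⁻¹ * L
  have hdB (i : ι) : d i = (Bᵀ * A i * B).trace := by
    rw [hd, htranspose hMw]
    simp only [B, Matrix.mul_assoc]
  have hd0 (i : ι) : 0 ≤ d i := hdB i ▸ (hA i).trace_transpose_mul_mul_nonneg B
  have hcs (i : ι) : (B'ᵀ * A i * B).trace ≤ √(d i * (B'ᵀ * A i * B').trace) := by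
    refine Real.le_sqrt_of_sq_le ?_
    rw [hdB i, mul_comm]
    exact (hA i).trace_transpose_mul_mul_sq_le B' B
  have hsum_w : ∑ i, w i * (B'ᵀ * A i * B).trace = (Lᵀ * (M w')⁻¹ * L).trace := by
    rw [← trace_transpose_mul_sum_smul_mul, ← hM, Matrix.mul_assoc, hcancel hMw, htranspose hMw']
  have hsum_w' : ∑ i, w' i * (B'ᵀ * A i * B').trace = (Lᵀ * (M w')⁻¹ * L).trace := by
    rw [← trace_transpose_mul_sum_smul_mul, ← hM, Matrix.mul_assoc, hcancel hMw', htranspose hMw']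
  have hsum_d : ∑ i, w i * d i = (Lᵀ * (M w)⁻¹ * L).trace := by
    simp only [hdB]
    rw [← trace_transpose_mul_sum_smul_mul, ← hM, Matrix.mul_assoc, hcancel hMw, htranspose hMw]
  have hS : ∑ j, w j * d j ^ lam ≠ 0 := by
    obtain ⟨i, hi⟩ := hdne
    refine (Finset.sum_pos' (fun j _ => mul_nonneg (hw j).le (Real.rpow_nonneg (hd0 j) _))
      ⟨i, Finset.mem_univ _, mul_pos (hw i) (Real.rpow_pos_of_pos ((hd0 i).lt_of_ne' hi) _)⟩).ne'
  rw [← hsum_d]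
  refine le_sum_mul_of_le_sum_mul_sqrt_of_mul_eq (fun i => (hw i).le) hw1 hd0
    (fun i => (hA i).trace_transpose_mul_mul_nonneg B') hlam0 hlam1 ?_ ?_
  · rw [← hsum_w]
    exact Finset.sum_le_sum fun i _ => mul_le_mul_of_nonneg_left (hcs i) (hw i).le
  · rw [← hsum_w', Finset.mul_sum]
    refine Finset.sum_congr rfl fun i _ => ?_
    rw [hw' i]
    field_simp

theorem stmt_4_general {n m r : ℕ}
    (A : Fin n → Matrix (Fin m) (Fin m) ℝ) (hA : ∀ i, (A i).PosSemidef)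
    (M : (Fin n → ℝ) → Matrix (Fin m) (Fin m) ℝ)
    (hM : ∀ v : Fin n → ℝ, M v = ∑ i, v i • A i)
    (p : ℝ) (hp1 : -1 ≤ p) (hp0 : p < 0)
    (K : Matrix (Fin m) (Fin r) ℝ) (hK : K.rank = r)
    (w : Fin n → ℝ) (hw : ∀ i, 0 < w i) (hw1 : ∑ i, w i = 1)
    (lam : ℝ) (hlam0 : 0 < lam) (hlam1 : lam ≤ 1)
    (d : Fin n → ℝ)
    (hd : ∀ i, d i =
      ((M w)⁻¹ * K * mpow (Kᵀ * (M w)⁻¹ * K) (-p - 1) * Kᵀ * (M w)⁻¹ * A i).trace)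
    (w' : Fin n → ℝ)
    (hw' : ∀ i, w' i = w i * d i ^ lam / ∑ j, w j * d j ^ lam)
    (hMwpos : (M w).PosDef) (hMw'pos : (M w').PosDef)
    (hdne : ∃ i, d i ≠ 0) :
    (mpow (Kᵀ * (M w')⁻¹ * K) (-p)).trace ≤ (mpow (Kᵀ * (M w)⁻¹ * K) (-p)).trace := by
  set q := -p
  set Y := Kᵀ * (M w)⁻¹ * K
  have hK' : K.rank = Fintype.card (Fin r) := by rw [hK, Fintype.card_fin]
  have hY : Y.PosDef := hMwpos.inv.transpose_mul_mul_of_rank_eq_card hK'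
  have hX := hMw'pos.inv.transpose_mul_mul_of_rank_eq_card hK'
  set L := K * mpow Y ((q - 1) / 2)
  have hdL (i : Fin n) : d i = (Lᵀ * (M w)⁻¹ * A i * (M w)⁻¹ * L).trace := by
    rw [hd i, Matrix.mul_assoc _ _ (A i), hY.trace_mul_mul_mpow_mul_transpose_mul]
    simp only [L, Matrix.mul_assoc]
  have hstep := trace_transpose_mul_inv_mul_le_of_multiplicative_update hA hM hw hw1 hlam0.le
    hlam1 L hdL hw' hMwpos hMw'pos hdne
  rw [hY.trace_conj_mul_mpow_half, hY.trace_conj_mul_mpow_half, hY.mpow_mul_self,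
    sub_add_cancel] at hstep
  calc (mpow (Kᵀ * (M w')⁻¹ * K) q).trace
      ≤ (1 - q) * (mpow Y q).trace + q * (mpow Y (q - 1) * (Kᵀ * (M w')⁻¹ * K)).trace :=
        hY.trace_mpow_le hX.posSemidef (by linarith) (by linarith)
    _ ≤ (1 - q) * (mpow Y q).trace + q * (mpow Y q).trace := by gcongr; linarith
    _ = (mpow Y q).trace := by ring

/-- Monotonicity of the multiplicative algorithm for
`φ_{p,K}(M) = -tr((Kᵀ M⁻¹ K)^{-p})`, `p ∈ [-1, 0)`, for every power
`lam ∈ (0,1]`. -/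
theorem stmt_4 {n m r : ℕ} (hn : 0 < n) (hm : 0 < m) (hr : 0 < r) (hrm : r ≤ m)
    (A : Fin n → Matrix (Fin m) (Fin m) ℝ) (hA : ∀ i, (A i).PosSemidef)
    (M : (Fin n → ℝ) → Matrix (Fin m) (Fin m) ℝ)
    (hM : ∀ v : Fin n → ℝ, M v = ∑ i, v i • A i)
    (p : ℝ) (hp1 : -1 ≤ p) (hp0 : p < 0)
    (K : Matrix (Fin m) (Fin r) ℝ) (hK : K.rank = r)
    (w : Fin n → ℝ) (hw : ∀ i, 0 < w i) (hw1 : ∑ i, w i = 1)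
    (lam : ℝ) (hlam0 : 0 < lam) (hlam1 : lam ≤ 1)
    (d : Fin n → ℝ)
    (hd : ∀ i, d i =
      ((M w)⁻¹ * K * mpow (Kᵀ * (M w)⁻¹ * K) (-p - 1) * Kᵀ * (M w)⁻¹ * A i).trace)
    (w' : Fin n → ℝ)
    (hw' : ∀ i, w' i = w i * d i ^ lam / ∑ j, w j * d j ^ lam)
    (hMwpos : (M w).PosDef) (hMw'pos : (M w').PosDef)
    (hdne : ∃ i, d i ≠ 0) :
    (mpow (Kᵀ * (M w')⁻¹ * K) (-p)).trace ≤ (mpow (Kᵀ * (M w)⁻¹ * K) (-p)).trace :=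
  stmt_4_general A hA M hM p hp1 hp0 K hK w hw hw1 lam hlam0 hlam1 d hd w' hw' hMwpos hMw'pos hdne
end

section
/- Let c ∈ ℝ^m be a nonzero vector, let w be a probability vector with w_i > 0 for all i, let λ ∈ (0,1], set d_i(w) = cᵀ M(w)^{-1} A_i M(w)^{-1} c, and define w'_i = w_i d_i(w)^λ / Σ_j w_j d_j(w)^λ. If M(w) and M(w') are both positive definite, then cᵀ M(w')^{-1} c ≤ cᵀ M(w)^{-1} c. (Monotonicity of the multiplicative algorithm for the c-criterion φ_{-1,c}(M) = -cᵀ M^{-1} c.) -/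
/-! Put `y = M(w)⁻¹ c`, `x = M(w')⁻¹ c`, `P = cᵀy = Σ wᵢ dᵢ` and `Q = cᵀx`. Reading `Q` both as
`xᵀ M(w) y` and as `xᵀ M(w') x` gives `Q = Σ wᵢ xᵀAᵢy = Σ w'ᵢ xᵀAᵢx`. Cauchy–Schwarz for each `Aᵢ`,
and then for the sum over `i` with the splitting `wᵢ² dᵢ = (S w'ᵢ) (wᵢ dᵢ^(1-λ))`, where
`S = Σ wⱼ dⱼ^λ`, yields `Q² ≤ Q · S Σ wᵢ dᵢ^(1-λ)`. Finally `S Σ wᵢ dᵢ^(1-λ) ≤ P` is Chebyshev's sum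
inequality for the similarly ordered sequences `dᵢ^λ` and `dᵢ^(1-λ)`. -/

open Matrix Finset Real

theorem Monovary.weighted_sum_mul_sum_le_sum_mul_sum {ι R : Type*} [Fintype ι] [CommRing R]
    [LinearOrder R] [IsStrictOrderedRing R] {w f g : ι → R} (hw : ∀ i, 0 ≤ w i)
    (hfg : Monovary f g) :
    (∑ i, w i * f i) * (∑ i, w i * g i) ≤ (∑ i, w i) * ∑ i, w i * (f i * g i) := by
  have hpairs : 0 ≤ ∑ i, ∑ j, w i * w j * ((f j - f i) * (g j - g i)) :=
    sum_nonneg fun i _ ↦ sum_nonneg fun j _ ↦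
      mul_nonneg (mul_nonneg (hw i) (hw j)) (hfg.sub_mul_sub_nonneg i j)
  have hexpand : ∑ i, ∑ j, w i * w j * ((f j - f i) * (g j - g i)) =
      2 * ((∑ i, w i) * ∑ i, w i * (f i * g i) - (∑ i, w i * f i) * ∑ i, w i * g i) := by
    simp only [show ∀ i j, w i * w j * ((f j - f i) * (g j - g i)) =
        w i * (w j * (f j * g j)) + w i * (f i * g i) * w j - w i * f i * (w j * g j)
          - w i * g i * (w j * f j) from fun i j ↦ by ring,
      sum_add_distrib, sum_sub_distrib, ← mul_sum, ← sum_mul]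
    ring
  linarith

theorem Real.rpow_mul_rpow_one_sub {x : ℝ} (hx : 0 ≤ x) (p : ℝ) : x ^ p * x ^ (1 - p) = x := by
  rw [← rpow_add' hx (by norm_num), add_sub_cancel, rpow_one]

section RealPowers

variable {ι : Type*} {w d : ι → ℝ} {p q lam : ℝ}

theorem monovary_rpow_rpow (hd : ∀ i, 0 ≤ d i) (hp : 0 ≤ p) (hq : 0 ≤ q) :
    Monovary (fun i ↦ d i ^ p) (fun i ↦ d i ^ q) := fun i j hij ↦
  rpow_le_rpow (hd i)
    (lt_of_not_ge fun hji ↦ hij.not_ge (rpow_le_rpow (hd j) hji hq)).le hp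

theorem sum_mul_rpow_mul_sum_mul_rpow_one_sub_le [Fintype ι] (hw : ∀ i, 0 ≤ w i)
    (hw1 : ∑ i, w i = 1) (hd : ∀ i, 0 ≤ d i) (hlam0 : 0 ≤ lam) (hlam1 : lam ≤ 1) :
    (∑ i, w i * d i ^ lam) * ∑ i, w i * d i ^ (1 - lam) ≤ ∑ i, w i * d i := by
  have := (monovary_rpow_rpow hd hlam0 (sub_nonneg.2 hlam1)).weighted_sum_mul_sum_le_sum_mul_sum hw
  simpa only [hw1, one_mul, rpow_mul_rpow_one_sub (hd _)] using this

end RealPowers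

theorem sum_mul_div_sum_of_nonneg {ι : Type*} [Fintype ι] {a : ι → ℝ} (ha : ∀ i, 0 ≤ a i)
    (i : ι) :
    (∑ j, a j) * (a i / ∑ j, a j) = a i := by
  rcases eq_or_ne (∑ j, a j) 0 with h | h
  · rw [h, zero_mul, (sum_eq_zero_iff_of_nonneg fun j _ ↦ ha j).1 h i (mem_univ i)]
  · exact mul_div_cancel₀ _ h

theorem sq_sum_mul_le_of_multiplicativeUpdate {ι : Type*} [Fintype ι] {w d α γ w' : ι → ℝ}
    {lam : ℝ} (hw : ∀ i, 0 ≤ w i) (hw1 : ∑ i, w i = 1) (hd : ∀ i, 0 ≤ d i)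
    (hα : ∀ i, 0 ≤ α i) (hγ : ∀ i, γ i ^ 2 ≤ α i * d i) (hlam0 : 0 ≤ lam) (hlam1 : lam ≤ 1)
    (hw' : ∀ i, w' i = w i * d i ^ lam / ∑ j, w j * d j ^ lam) :
    (∑ i, w i * γ i) ^ 2 ≤ (∑ i, w' i * α i) * ∑ i, w i * d i := by
  have hwd : ∀ i, 0 ≤ w i * d i ^ lam := fun i ↦ mul_nonneg (hw i) (rpow_nonneg (hd i) _)
  set S := ∑ j, w j * d j ^ lam
  have hS : ∀ i, S * w' i = w i * d i ^ lam := fun i ↦ by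
    rw [hw']; exact sum_mul_div_sum_of_nonneg hwd i
  have hw'0 : ∀ i, 0 ≤ w' i := fun i ↦ by
    rw [hw']; exact div_nonneg (hwd i) (sum_nonneg fun j _ ↦ hwd j)
  calc (∑ i, w i * γ i) ^ 2
      ≤ (∑ i, S * w' i * α i) * ∑ i, w i * d i ^ (1 - lam) := by
        refine sum_sq_le_sum_mul_sum_of_sq_le_mul _
          (fun i _ ↦ by rw [hS]; exact mul_nonneg (hwd i) (hα i))
          (fun i _ ↦ mul_nonneg (hw i) (rpow_nonneg (hd i) _)) fun i _ ↦ ?_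
        calc (w i * γ i) ^ 2 = w i ^ 2 * γ i ^ 2 := mul_pow _ _ _
          _ ≤ w i ^ 2 * (α i * d i) := by gcongr; exact hγ i
          _ = S * w' i * α i * (w i * d i ^ (1 - lam)) := by
            rw [hS]; linear_combination -(w i ^ 2 * α i) * rpow_mul_rpow_one_sub (hd i) lam
    _ = (∑ i, w' i * α i) * (S * ∑ i, w i * d i ^ (1 - lam)) := by
        simp only [mul_assoc, ← mul_sum]; ring
    _ ≤ (∑ i, w' i * α i) * ∑ i, w i * d i := by
        gcongr
        · exact sum_nonneg fun i _ ↦ mul_nonneg (hw'0 i) (hα i)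
        · exact sum_mul_rpow_mul_sum_mul_rpow_one_sub_le hw hw1 hd hlam0 hlam1

theorem dotProduct_sum_smul_mulVec {ι m R : Type*} [Fintype ι] [Fintype m] [CommSemiring R]
    (A : ι → Matrix m m R) (v : ι → R) (x z : m → R) :
    x ⬝ᵥ (∑ i, v i • A i) *ᵥ z = ∑ i, v i * (x ⬝ᵥ A i *ᵥ z) := by
  simp only [sum_mulVec, dotProduct_sum, smul_mulVec, dotProduct_smul, smul_eq_mul]

theorem Matrix.PosSemidef.dotProduct_mulVec_sq_le {m : Type*} [Fintype m] [DecidableEq m]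
    {A : Matrix m m ℝ} (hA : A.PosSemidef) (x y : m → ℝ) :
    (x ⬝ᵥ A *ᵥ y) ^ 2 ≤ (x ⬝ᵥ A *ᵥ x) * (y ⬝ᵥ A *ᵥ y) := by
  simpa only [toBilin'_apply'] using (toBilin' A).apply_sq_le_of_symm
    (fun v ↦ by simpa only [toBilin'_apply', star_trivial] using hA.dotProduct_mulVec_nonneg v)
    (LinearMap.BilinForm.isSymm_iff.1 <|
      isSymm_toBilin'_iff_isSymm.2 (isHermitian_iff_isSymm.1 hA.isHermitian)) x y

theorem Matrix.IsSymm.dotProduct_mul_mul_mulVec {m R : Type*} [Fintype m] [CommSemiring R]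
    {B : Matrix m m R} (hB : B.IsSymm) (A : Matrix m m R) (c : m → R) :
    c ⬝ᵥ (B * A * B) *ᵥ c = (B *ᵥ c) ⬝ᵥ A *ᵥ (B *ᵥ c) := by
  rw [← mulVec_mulVec, ← mulVec_mulVec, dotProduct_mulVec]
  congr 1
  rw [← vecMul_transpose, hB.eq]

theorem Matrix.mulVec_nonsing_inv_mulVec {m R : Type*} [Fintype m] [DecidableEq m] [CommRing R]
    {A : Matrix m m R} (hA : IsUnit A.det) (c : m → R) : A *ᵥ (A⁻¹ *ᵥ c) = c := by
  rw [mulVec_mulVec, mul_nonsing_inv A hA, one_mulVec]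

theorem stmt_5_general {n m : ℕ}
    (A : Fin n → Matrix (Fin m) (Fin m) ℝ) (hA : ∀ i, (A i).PosSemidef)
    (M : (Fin n → ℝ) → Matrix (Fin m) (Fin m) ℝ)
    (hM : ∀ v : Fin n → ℝ, M v = ∑ i, v i • A i)
    (c : Fin m → ℝ)
    (w : Fin n → ℝ) (hw : ∀ i, 0 < w i) (hw1 : ∑ i, w i = 1)
    (lam : ℝ) (hlam0 : 0 < lam) (hlam1 : lam ≤ 1)
    (d : Fin n → ℝ)
    (hd : ∀ i, d i = c ⬝ᵥ ((M w)⁻¹ * A i * (M w)⁻¹) *ᵥ c)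
    (w' : Fin n → ℝ)
    (hw' : ∀ i, w' i = w i * d i ^ lam / ∑ j, w j * d j ^ lam)
    (hMwpos : (M w).PosDef) (hMw'pos : (M w').PosDef) :
    c ⬝ᵥ (M w')⁻¹ *ᵥ c ≤ c ⬝ᵥ (M w)⁻¹ *ᵥ c := by
  set y := (M w)⁻¹ *ᵥ c
  set x := (M w')⁻¹ *ᵥ c
  have hy : M w *ᵥ y = c := mulVec_nonsing_inv_mulVec (hMwpos.isUnit.map detMonoidHom) c
  have hx : M w' *ᵥ x = c := mulVec_nonsing_inv_mulVec (hMw'pos.isUnit.map detMonoidHom) c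
  have hdy : ∀ i, d i = y ⬝ᵥ A i *ᵥ y := fun i ↦ by
    rw [hd, (isHermitian_iff_isSymm.1 hMwpos.isHermitian.inv).dotProduct_mul_mul_mulVec]
  have hP : c ⬝ᵥ y = ∑ i, w i * d i := by
    rw [← hy, dotProduct_comm, hM, dotProduct_sum_smul_mulVec]; simp only [hdy]
  have hQ : c ⬝ᵥ x = ∑ i, w' i * (x ⬝ᵥ A i *ᵥ x) := by
    rw [← hx, dotProduct_comm, hM, dotProduct_sum_smul_mulVec]
  have hQ' : c ⬝ᵥ x = ∑ i, w i * (x ⬝ᵥ A i *ᵥ y) := by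
    rw [← hy, dotProduct_comm, hM, dotProduct_sum_smul_mulVec]
  have key := sq_sum_mul_le_of_multiplicativeUpdate (fun i ↦ (hw i).le) hw1
    (fun i ↦ by simpa [hdy] using (hA i).dotProduct_mulVec_nonneg y)
    (fun i ↦ by simpa using (hA i).dotProduct_mulVec_nonneg x)
    (fun i ↦ hdy i ▸ (hA i).dotProduct_mulVec_sq_le x y) hlam0.le hlam1 hw'
  rw [← hQ', ← hQ, ← hP] at key
  have hQ0 : 0 ≤ c ⬝ᵥ x := by simpa using hMw'pos.posSemidef.inv.dotProduct_mulVec_nonneg c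
  have hP0 : 0 ≤ c ⬝ᵥ y := by simpa using hMwpos.posSemidef.inv.dotProduct_mulVec_nonneg c
  nlinarith

/-- Monotonicity of the multiplicative algorithm for the c-criterion
`φ_{-1,c}(M) = -cᵀ M⁻¹ c`, for every power `lam ∈ (0,1]`. -/
theorem stmt_5 {n m : ℕ} (hn : 0 < n) (hm : 0 < m)
    (A : Fin n → Matrix (Fin m) (Fin m) ℝ) (hA : ∀ i, (A i).PosSemidef)
    (M : (Fin n → ℝ) → Matrix (Fin m) (Fin m) ℝ)
    (hM : ∀ v : Fin n → ℝ, M v = ∑ i, v i • A i)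
    (c : Fin m → ℝ) (hc : c ≠ 0)
    (w : Fin n → ℝ) (hw : ∀ i, 0 < w i) (hw1 : ∑ i, w i = 1)
    (lam : ℝ) (hlam0 : 0 < lam) (hlam1 : lam ≤ 1)
    (d : Fin n → ℝ)
    (hd : ∀ i, d i = c ⬝ᵥ ((M w)⁻¹ * A i * (M w)⁻¹) *ᵥ c)
    (w' : Fin n → ℝ)
    (hw' : ∀ i, w' i = w i * d i ^ lam / ∑ j, w j * d j ^ lam)
    (hMwpos : (M w).PosDef) (hMw'pos : (M w').PosDef) :
    c ⬝ᵥ (M w')⁻¹ *ᵥ c ≤ c ⬝ᵥ (M w)⁻¹ *ᵥ c :=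
  stmt_5_general A hA M hM c w hw hw1 lam hlam0 hlam1 d hd w' hw' hMwpos hMw'pos
end

section
/- Assume λ = 1, and assume additionally that ψ is strictly increasing (if M_2 - M_1 is positive semidefinite, M_1, M_2 positive definite and M_1 ≠ M_2, then ψ(M_1) < ψ(M_2)) and strictly concave (for positive definite M_1 ≠ M_2, ψ(M_2) < ψ(M_1) + tr(D(M_1)(M_2 - M_1))). Let w be a probability vector with all coordinates positive such that M(w) is positive definite, D(M(w)^{-1}) A_i ≠ 0 for all i, and M(Tw) is positive definite, where (Tw)_i = w_i d_i(w) / Σ_j w_j d_j(w) and d_i(w) = tr(M(w)^{-1} D(M(w)^{-1}) M(w)^{-1} A_i). If Tw ≠ w, then ψ(M(Tw)^{-1}) < ψ(M(w)^{-1}) strictly. (Strict monotonicity of the algorithm for λ = 1 under strictly increasing, strictly concave ψ.) -/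
/-!
Write `N = M w`, `Q = M Tw`, `B = D N⁻¹` and `C = N⁻¹ B N⁻¹`, so that `d i = tr (C Aᵢ)` and
`s := ∑ wⱼ dⱼ = tr (B N⁻¹) > 0`. Strict concavity of `ψ` at `N⁻¹` reduces the claim to
`tr (B Q⁻¹) ≤ s` and `Q ≠ N`.

For the inequality, `tr (B Q⁻¹) = tr (C N Q⁻¹ N)`. Factor `C = Gᵀ G` and put `Y = G N Q⁻¹`;
then `tr (G N Q⁻¹ N Gᵀ) = 2 tr (Y N Gᵀ) - tr (Y Q Yᵀ)`. Expanding `N` and `Q` in the `Aᵢ`, the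
`i`-th term is `(wᵢ / s) (2 s bᵢ - dᵢ eᵢ)` with `bᵢ² ≤ dᵢ eᵢ` by Cauchy–Schwarz for the
semi-inner product `tr (Y Aᵢ Xᵀ)`, hence at most `wᵢ s`.

If `Q = N`, then `∑ Twᵢ dᵢ = tr (C N) = s`, i.e. `∑ wᵢ dᵢ² = s²`: equality in Jensen's
inequality for `x ↦ x²`, so `d` is constant and `Tw = w`.
-/

open Matrix Finset
open scoped MatrixOrder

variable {n ι : Type*} [Fintype n] [Fintype ι]

theorem mul_div_sum_mul_eq_self_of_sum_eq {w d : ι → ℝ} (hw : ∀ i, 0 < w i) (hw1 : ∑ i, w i = 1)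
    (hs : ∑ j, w j * d j ≠ 0)
    (h : ∑ i, w i * d i / (∑ j, w j * d j) * d i = ∑ j, w j * d j) (i : ι) :
    w i * d i / ∑ j, w j * d j = w i := by
  set s := ∑ j, w j * d j
  have hsq : ∑ j, w j * d j ^ 2 = (∑ j, w j * d j / s * d j) * s := by
    rw [sum_mul]
    exact sum_congr rfl fun j _ => by field_simp
  rw [h, ← sq] at hsq
  have hconst := (Even.strictConvexOn_pow even_two two_ne_zero).eq_of_le_map_sum
    (fun j _ => hw j) hw1 (fun j _ => Set.mem_univ (d j)) hsq.le
  have hdi : d i = s := by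
    calc d i = ∑ j, w j * d i := by rw [← sum_mul, hw1, one_mul]
      _ = s := sum_congr rfl fun j _ => by rw [hconst (mem_univ i) (mem_univ j)]
  rw [← hdi] at hs ⊢
  field_simp

namespace Matrix

theorem trace_mul_mul_transpose_sq_le {A : Matrix n n ℝ} (hA : A.PosSemidef)
    (X Y : Matrix n n ℝ) :
    (Y * A * Xᵀ).trace ^ 2 ≤ (X * A * Xᵀ).trace * (Y * A * Yᵀ).trace := by
  let := A.toMatrixSeminormedAddCommGroup hA
  let := A.toMatrixInnerProductSpace hA
  have h : (Y * A * Xᴴ).trace ^ 2 ≤ (X * A * Xᴴ).trace * (Y * A * Yᴴ).trace :=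
    (sq _).trans_le (real_inner_mul_inner_self_le X Y)
  simpa only [conjTranspose_eq_transpose_of_trivial] using h

theorem exists_eq_transpose_mul_self [DecidableEq n] {C : Matrix n n ℝ} (hC : C.PosSemidef) :
    ∃ G : Matrix n n ℝ, C = Gᵀ * G := by
  obtain ⟨G, rfl⟩ := CStarAlgebra.nonneg_iff_eq_star_mul_self.mp hC.nonneg
  exact ⟨G, by rw [star_eq_conjTranspose, conjTranspose_eq_transpose_of_trivial]⟩

theorem trace_mul_sum_smul_mul (X Y : Matrix n n ℝ) (c : ι → ℝ) (A : ι → Matrix n n ℝ) :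
    (X * (∑ i, c i • A i) * Y).trace = ∑ i, c i * (X * A i * Y).trace := by
  simp [Matrix.mul_sum, Matrix.sum_mul, trace_sum, trace_smul]

theorem trace_mul_pos_of_posDef [DecidableEq n] {C N : Matrix n n ℝ} (hC : C.PosSemidef)
    (hC0 : C ≠ 0) (hN : N.PosDef) : 0 < (C * N).trace := by
  obtain ⟨G, rfl⟩ := CStarAlgebra.nonneg_iff_eq_star_mul_self.mp hC.nonneg
  obtain ⟨R, hR, rfl⟩ := CStarAlgebra.isStrictlyPositive_iff_eq_star_mul_self.mp
    hN.isStrictlyPositive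
  have hGR : G * Rᴴ ≠ 0 := by
    intro h
    rw [((isUnit_conjTranspose R).mpr hR).mul_left_eq_zero] at h
    simp [h] at hC0
  have htr : (star G * G * (star R * R)).trace = ((G * Rᴴ)ᴴ * (G * Rᴴ)).trace := by
    simp only [star_eq_conjTranspose, conjTranspose_mul, conjTranspose_conjTranspose]
    rw [← Matrix.mul_assoc, trace_mul_comm]
    simp only [Matrix.mul_assoc]
  rw [htr]
  exact (posSemidef_conjTranspose_mul_self _).trace_nonneg.lt_of_ne'
    (trace_conjTranspose_mul_self_eq_zero_iff.not.mpr hGR)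

theorem trace_mul_mul_inv_mul_le [DecidableEq n] {A : ι → Matrix n n ℝ}
    (hA : ∀ i, (A i).PosSemidef) {C : Matrix n n ℝ} (hC : C.PosSemidef) {w : ι → ℝ}
    (hw : ∀ i, 0 ≤ w i) {s : ℝ} (hs : 0 < s) {N Q : Matrix n n ℝ} (hN : N = ∑ i, w i • A i)
    (hQ : Q = ∑ i, (w i * (C * A i).trace / s) • A i) (hQdet : IsUnit Q.det) :
    (C * N * Q⁻¹ * N).trace ≤ s * ∑ i, w i := by
  obtain ⟨G, rfl⟩ := exists_eq_transpose_mul_self hC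
  have hNt : Nᵀ = N := by
    rw [hN]
    exact (isHermitian_iff_isSymm.mp
      (posSemidef_sum _ fun i _ => (hA i).smul (hw i)).isHermitian).eq
  set Y := G * N * Q⁻¹ with hY
  have hvar : (Gᵀ * G * N * Q⁻¹ * N).trace = 2 * (Y * N * Gᵀ).trace - (Y * Q * Yᵀ).trace := by
    have hYQ : Y * Q = G * N := by rw [hY, Matrix.mul_assoc, nonsing_inv_mul _ hQdet, mul_one]
    have h1 : (Gᵀ * G * N * Q⁻¹ * N).trace = (Y * N * Gᵀ).trace := by
      rw [hY, show Gᵀ * G * N * Q⁻¹ * N = Gᵀ * (G * N * Q⁻¹ * N) by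
        simp only [Matrix.mul_assoc], trace_mul_comm]
    have h2 : (Y * Q * Yᵀ).trace = (Y * N * Gᵀ).trace := by
      rw [hYQ, ← trace_transpose]
      simp only [transpose_mul, transpose_transpose, hNt, Matrix.mul_assoc]
    linarith
  have hd (i : ι) : (Gᵀ * G * A i).trace = (G * A i * Gᵀ).trace := by
    rw [Matrix.mul_assoc, trace_mul_comm]
  calc (Gᵀ * G * N * Q⁻¹ * N).trace
      = ∑ i, w i / s * (2 * s * (Y * A i * Gᵀ).trace
          - (G * A i * Gᵀ).trace * (Y * A i * Yᵀ).trace) := by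
        rw [hvar, hN, hQ, trace_mul_sum_smul_mul, trace_mul_sum_smul_mul, mul_sum,
          ← sum_sub_distrib]
        refine sum_congr rfl fun i _ => ?_
        rw [hd]
        field_simp
    _ ≤ ∑ i, w i / s * s ^ 2 := by
        refine sum_le_sum fun i _ => mul_le_mul_of_nonneg_left ?_ (div_nonneg (hw i) hs.le)
        nlinarith [trace_mul_mul_transpose_sq_le (hA i) G Y,
          sq_nonneg (s - (Y * A i * Gᵀ).trace)]
    _ = s * ∑ i, w i := by
        rw [mul_sum]
        exact sum_congr rfl fun i _ => by field_simp

end Matrix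

theorem stmt_18_general {n m : ℕ}
    (A : Fin n → Matrix (Fin m) (Fin m) ℝ) (hA : ∀ i, (A i).PosSemidef)
    (ψ : Matrix (Fin m) (Fin m) ℝ → ℝ)
    (D : Matrix (Fin m) (Fin m) ℝ → Matrix (Fin m) (Fin m) ℝ)
    (hDpsd : ∀ M : Matrix (Fin m) (Fin m) ℝ, M.PosDef → (D M).PosSemidef)
    -- ψ is strictly concave
    (hsconc : ∀ M₁ M₂ : Matrix (Fin m) (Fin m) ℝ, M₁.PosDef → M₂.PosDef →
      M₁ ≠ M₂ → ψ M₂ < ψ M₁ + (D M₁ * (M₂ - M₁)).trace)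
    (M : (Fin n → ℝ) → Matrix (Fin m) (Fin m) ℝ)
    (hM : ∀ v : Fin n → ℝ, M v = ∑ i, v i • A i)
    (w : Fin n → ℝ) (hw : ∀ i, 0 < w i) (hw1 : ∑ i, w i = 1)
    (d : Fin n → ℝ)
    (hd : ∀ i, d i = ((M w)⁻¹ * D ((M w)⁻¹) * (M w)⁻¹ * A i).trace)
    (Tw : Fin n → ℝ)
    (hTw : ∀ i, Tw i = w i * d i / ∑ j, w j * d j)
    (hMwpos : (M w).PosDef)
    (hDA : ∀ i, D ((M w)⁻¹) * A i ≠ 0)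
    (hMTwpos : (M Tw).PosDef)
    (hne : Tw ≠ w) :
    ψ ((M Tw)⁻¹) < ψ ((M w)⁻¹) := by
  have hNdet : IsUnit (M w).det := (isUnit_iff_isUnit_det _).mp hMwpos.isUnit
  have hQdet : IsUnit (M Tw).det := (isUnit_iff_isUnit_det _).mp hMTwpos.isUnit
  set B := D (M w)⁻¹
  set C := (M w)⁻¹ * B * (M w)⁻¹
  have hC : C.PosSemidef := by
    have h := (hDpsd _ hMwpos.inv).conjTranspose_mul_mul_same (M w)⁻¹
    rwa [hMwpos.inv.isHermitian.eq] at h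
  have hNCN : M w * C * M w = B := by
    simp only [C, Matrix.mul_assoc, nonsing_inv_mul _ hNdet, mul_one,
      mul_nonsing_inv_cancel_left (A := M w) _ hNdet]
  have htrC (v : Fin n → ℝ) : (C * M v).trace = ∑ i, v i * d i := by
    simpa [hM v, hd] using Matrix.trace_mul_sum_smul_mul C 1 v A
  set s := ∑ j, w j * d j
  have hs : 0 < s := by
    obtain ⟨i, -⟩ := Function.ne_iff.mp hne
    have hC0 : C ≠ 0 := fun h => hDA i (by rw [← hNCN, h]; simp)
    simpa [htrC] using Matrix.trace_mul_pos_of_posDef hC hC0 hMwpos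
  have hQ : M Tw = ∑ i, (w i * (C * A i).trace / s) • A i := by
    simp only [hM, hTw, hd, s]
  have hBQ : (B * (M Tw)⁻¹).trace ≤ s := by
    have key := Matrix.trace_mul_mul_inv_mul_le hA hC (fun i => (hw i).le) hs (hM w) hQ hQdet
    rw [hw1, mul_one] at key
    rwa [← hNCN, show M w * C * M w * (M Tw)⁻¹ = M w * (C * M w * (M Tw)⁻¹) by
      simp only [Matrix.mul_assoc], trace_mul_comm]
  have hBN : (B * (M w)⁻¹).trace = s := by
    rw [← hNCN, Matrix.mul_assoc, Matrix.mul_assoc, mul_nonsing_inv _ hNdet, mul_one,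
      trace_mul_comm, htrC]
  have hQN : M Tw ≠ M w := fun hEq => hne <| funext fun i => by
    rw [hTw i]
    refine mul_div_sum_mul_eq_self_of_sum_eq hw hw1 hs.ne' ?_ i
    simpa [hTw] using (htrC Tw).symm.trans (hEq ▸ htrC w)
  have hstrict := hsconc _ _ hMwpos.inv hMTwpos.inv
    fun h => hQN (Matrix.inv_inj h.symm hQdet)
  rw [Matrix.mul_sub, trace_sub, hBN] at hstrict
  linarith

/-- Strict monotonicity of the multiplicative algorithm for `lam = 1`, under a
strictly increasing and strictly concave `ψ`: if `Tw ≠ w` then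
`ψ(M(Tw)⁻¹) < ψ(M(w)⁻¹)` strictly. -/
theorem stmt_18 {n m : ℕ} (hn : 0 < n) (hm : 0 < m)
    (A : Fin n → Matrix (Fin m) (Fin m) ℝ) (hA : ∀ i, (A i).PosSemidef)
    (ψ : Matrix (Fin m) (Fin m) ℝ → ℝ)
    (D : Matrix (Fin m) (Fin m) ℝ → Matrix (Fin m) (Fin m) ℝ)
    (hDpsd : ∀ M : Matrix (Fin m) (Fin m) ℝ, M.PosDef → (D M).PosSemidef)
    (hconc : ∀ M₁ M₂ : Matrix (Fin m) (Fin m) ℝ, M₁.PosDef → M₂.PosDef →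
      ψ M₂ ≤ ψ M₁ + (D M₁ * (M₂ - M₁)).trace)
    -- ψ is strictly increasing
    (hsinc : ∀ M₁ M₂ : Matrix (Fin m) (Fin m) ℝ, M₁.PosDef → M₂.PosDef →
      (M₂ - M₁).PosSemidef → M₁ ≠ M₂ → ψ M₁ < ψ M₂)
    -- ψ is strictly concave
    (hsconc : ∀ M₁ M₂ : Matrix (Fin m) (Fin m) ℝ, M₁.PosDef → M₂.PosDef →
      M₁ ≠ M₂ → ψ M₂ < ψ M₁ + (D M₁ * (M₂ - M₁)).trace)
    (M : (Fin n → ℝ) → Matrix (Fin m) (Fin m) ℝ)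
    (hM : ∀ v : Fin n → ℝ, M v = ∑ i, v i • A i)
    (w : Fin n → ℝ) (hw : ∀ i, 0 < w i) (hw1 : ∑ i, w i = 1)
    (d : Fin n → ℝ)
    (hd : ∀ i, d i = ((M w)⁻¹ * D ((M w)⁻¹) * (M w)⁻¹ * A i).trace)
    (Tw : Fin n → ℝ)
    (hTw : ∀ i, Tw i = w i * d i / ∑ j, w j * d j)
    (hMwpos : (M w).PosDef)
    (hDA : ∀ i, D ((M w)⁻¹) * A i ≠ 0)
    (hMTwpos : (M Tw).PosDef)
    (hne : Tw ≠ w) :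
    ψ ((M Tw)⁻¹) < ψ ((M w)⁻¹) :=
  stmt_18_general A hA ψ D hDpsd hsconc M hM w hw hw1 d hd Tw hTw hMwpos hDA hMTwpos hne
end
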